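/- If {u_j} is a sequence of viscosity solutions of the minimal surface system on a domain Ω ⊆ ℝⁿ with values in ℝᵐ, and u_j → u uniformly on compact subsets of Ω, then u is also a viscosity solution of the minimal surface system. -/

import Mathlib

open MeasureTheory Metric Set Filter Topology
open scoped ENNReal NNReal RealInnerProductSpace

noncomputable section

/-- Partial derivative in the `i`-th coordinate direction of a scalar function on `ℝⁿ`
(junk value `0` at points of non-differentiability). -/
def pder {n : ℕ} (i : Fin n) (f : EuclideanSpace ℝ (Fin n) → ℝ)
    (x : EuclideanSpace ℝ (Fin n)) : ℝ :=
  fderiv ℝ f x (EuclideanSpace.single i 1)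

/-- The induced metric `g_{ij} = δ_{ij} + ∑_β ∂_i u^β ∂_j u^β` on the graph of `u`. -/
def mssMetric (n m : ℕ) (u : EuclideanSpace ℝ (Fin n) → EuclideanSpace ℝ (Fin m))
    (x : EuclideanSpace ℝ (Fin n)) : Matrix (Fin n) (Fin n) ℝ :=
  Matrix.of fun i j =>
    (if i = j then (1 : ℝ) else 0) +
      ∑ β : Fin m, pder i (fun y => u y β) x * pder j (fun y => u y β) x

/-- The graph map `F(x) = (x, u(x)) ∈ ℝ^{n+m}`. -/
def graphMap (n m : ℕ) (u : EuclideanSpace ℝ (Fin n) → EuclideanSpace ℝ (Fin m))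
    (x : EuclideanSpace ℝ (Fin n)) : EuclideanSpace ℝ (Fin n ⊕ Fin m) :=
  (EuclideanSpace.equiv (Fin n ⊕ Fin m) ℝ).symm (Sum.elim (fun i => x i) (fun j => u x j))

/-- Projection of `ℝ^{n+m}` onto the `x`-coordinate plane `ℝⁿ`. -/
def projX (n m : ℕ) (p : EuclideanSpace ℝ (Fin n ⊕ Fin m)) : EuclideanSpace ℝ (Fin n) :=
  (EuclideanSpace.equiv (Fin n) ℝ).symm fun i => p (Sum.inl i)

/-- Projection of `ℝ^{n+m}` onto the `z`-coordinate plane `ℝᵐ`. -/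
def projZ (n m : ℕ) (p : EuclideanSpace ℝ (Fin n ⊕ Fin m)) : EuclideanSpace ℝ (Fin m) :=
  (EuclideanSpace.equiv (Fin m) ℝ).symm fun j => p (Sum.inr j)

/-- First variation of the area of the graph of `u` over `Ω` with respect to the
vector field `X` on `ℝ^{n+m}`:
`δ𝒢_u(X) = ∫_Ω ∑_{i,j,β} g^{ij} ∂_j F^β ∂_i (X^β ∘ F) √g dx`, `F(x) = (x, u(x))`. -/
def firstVariation (n m : ℕ) (Ω : Set (EuclideanSpace ℝ (Fin n)))
    (u : EuclideanSpace ℝ (Fin n) → EuclideanSpace ℝ (Fin m))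
    (X : EuclideanSpace ℝ (Fin n ⊕ Fin m) → EuclideanSpace ℝ (Fin n ⊕ Fin m)) : ℝ :=
  ∫ x in Ω,
    (∑ i : Fin n, ∑ j : Fin n, ∑ β : Fin n ⊕ Fin m,
        (mssMetric n m u x)⁻¹ i j * pder j (fun y => graphMap n m u y β) x *
          pder i (fun y => X (graphMap n m u y) β) x) *
      Real.sqrt (mssMetric n m u x).det

/-- `u` is a stationary solution of the minimal surface system on `Ω`: the first
variation of the area of its graph vanishes for every `C¹` vector field with compact
support contained in `Ω × ℝᵐ`. -/
def IsStationaryMSS (n m : ℕ) (Ω : Set (EuclideanSpace ℝ (Fin n)))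
    (u : EuclideanSpace ℝ (Fin n) → EuclideanSpace ℝ (Fin m)) : Prop :=
  ∀ X : EuclideanSpace ℝ (Fin n ⊕ Fin m) → EuclideanSpace ℝ (Fin n ⊕ Fin m),
    ContDiff ℝ 1 X → HasCompactSupport X →
    tsupport X ⊆ {p | projX n m p ∈ Ω} →
    firstVariation n m Ω u X = 0

/-- `G` is a comparison function for the minimal surface system in the open set `U`:
`G` is `C²` and at every `p ∈ U`, for every orthonormal family spanning an `n`-plane
orthogonal to `∇G(p)`, the trace of the Hessian of `G` along it is positive. -/
def IsComparisonFn (n m : ℕ) (U : Set (EuclideanSpace ℝ (Fin n ⊕ Fin m)))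
    (G : EuclideanSpace ℝ (Fin n ⊕ Fin m) → ℝ) : Prop :=
  ContDiff ℝ 2 G ∧
    ∀ p ∈ U, ∀ e : Fin n → EuclideanSpace ℝ (Fin n ⊕ Fin m),
      Orthonormal ℝ e → (∀ i, fderiv ℝ G p (e i) = 0) →
      0 < ∑ i : Fin n, iteratedFDeriv ℝ 2 G p ![e i, e i]

/-- `u` is a viscosity solution of the minimal surface system on `Ω`: `u` is continuous
and its graph cannot touch a level set `{G = c}` of a comparison function `G` from the
side `{G ≤ c}`. -/
def IsViscositySolution (n m : ℕ) (Ω : Set (EuclideanSpace ℝ (Fin n)))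
    (u : EuclideanSpace ℝ (Fin n) → EuclideanSpace ℝ (Fin m)) : Prop :=
  ContinuousOn u Ω ∧
    ∀ (U : Set (EuclideanSpace ℝ (Fin n ⊕ Fin m))) (G : EuclideanSpace ℝ (Fin n ⊕ Fin m) → ℝ)
      (c : ℝ) (x₀ : EuclideanSpace ℝ (Fin n)),
      IsOpen U → IsComparisonFn n m U G → x₀ ∈ Ω → graphMap n m u x₀ ∈ U →
      G (graphMap n m u x₀) = c →
      ¬ ∀ᶠ x in 𝓝[Ω] x₀, graphMap n m u x ∈ U → G (graphMap n m u x) ≤ c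

/-- The singular set of `u` in `Ω`: points of `Ω` having no open neighborhood inside `Ω`
on which `u` is `C^∞`. -/
def singularSet (n m : ℕ) (Ω : Set (EuclideanSpace ℝ (Fin n)))
    (u : EuclideanSpace ℝ (Fin n) → EuclideanSpace ℝ (Fin m)) :
    Set (EuclideanSpace ℝ (Fin n)) :=
  {x ∈ Ω | ¬ ∃ V, IsOpen V ∧ x ∈ V ∧ V ⊆ Ω ∧ ContDiffOn ℝ (⊤ : ℕ∞) u V}

namespace ViscStab

variable {n m : ℕ}

lemma graph_dist_sq (u v : EuclideanSpace ℝ (Fin n) → EuclideanSpace ℝ (Fin m))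
    (x y : EuclideanSpace ℝ (Fin n)) :
    dist (graphMap n m u x) (graphMap n m v y) ^ 2 = dist x y ^ 2 + dist (u x) (v y) ^ 2 := by
  simp only [EuclideanSpace.dist_eq]
  rw [Real.sq_sqrt (by positivity), Real.sq_sqrt (by positivity), Real.sq_sqrt (by positivity),
    Fintype.sum_sum_type]
  rfl

lemma dist_graphMap (u v : EuclideanSpace ℝ (Fin n) → EuclideanSpace ℝ (Fin m))
    (x : EuclideanSpace ℝ (Fin n)) :
    dist (graphMap n m u x) (graphMap n m v x) = dist (u x) (v x) := by
  have h := graph_dist_sq u v x x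
  simp only [dist_self] at h
  rw [(Real.sqrt_sq dist_nonneg).symm, h]
  simpa using Real.sqrt_sq (dist_nonneg (x := u x) (y := v x))

lemma dist_le_graph (u : EuclideanSpace ℝ (Fin n) → EuclideanSpace ℝ (Fin m))
    (x y : EuclideanSpace ℝ (Fin n)) :
    dist x y ≤ dist (graphMap n m u x) (graphMap n m u y) := by
  have h := graph_dist_sq u u x y
  nlinarith [dist_nonneg (x := graphMap n m u x) (y := graphMap n m u y),
    dist_nonneg (x := x) (y := y), sq_nonneg (dist (u x) (u y))]

lemma graph_dist_le (u v : EuclideanSpace ℝ (Fin n) → EuclideanSpace ℝ (Fin m))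
    (x y : EuclideanSpace ℝ (Fin n)) :
    dist (graphMap n m u x) (graphMap n m v y) ≤ dist x y + dist (u x) (v y) := by
  have h := graph_dist_sq u v x y
  nlinarith [dist_nonneg (x := graphMap n m u x) (y := graphMap n m v y),
    dist_nonneg (x := x) (y := y), dist_nonneg (x := u x) (y := v y),
    mul_nonneg (dist_nonneg (x := x) (y := y)) (dist_nonneg (x := u x) (y := v y))]

lemma continuousOn_graphMap {u : EuclideanSpace ℝ (Fin n) → EuclideanSpace ℝ (Fin m)}
    {s : Set (EuclideanSpace ℝ (Fin n))} (hu : ContinuousOn u s) :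
    ContinuousOn (graphMap n m u) s := by
  have hg : ContinuousOn
      (fun x => (Sum.elim (fun i => x i) (fun j => u x j) : (Fin n ⊕ Fin m) → ℝ)) s := by
    apply continuousOn_pi.2
    rintro (i | j)
    · exact (EuclideanSpace.proj (𝕜 := ℝ) i).continuous.continuousOn
    · exact (EuclideanSpace.proj j).continuous.comp_continuousOn hu
  exact ((EuclideanSpace.equiv (Fin n ⊕ Fin m) ℝ).symm.continuous).comp_continuousOn hg

lemma isCompact_onb (n m : ℕ) :
    IsCompact {e : Fin n → EuclideanSpace ℝ (Fin n ⊕ Fin m) | Orthonormal ℝ e} := by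
  apply Metric.isCompact_of_isClosed_isBounded
  · have : {e : Fin n → EuclideanSpace ℝ (Fin n ⊕ Fin m) | Orthonormal ℝ e} =
        ⋂ (i) (j), {e | ⟪e i, e j⟫ = (if i = j then (1:ℝ) else 0)} := by
      ext e
      simp only [mem_setOf_eq, mem_iInter, orthonormal_iff_ite]
    rw [this]
    exact isClosed_iInter fun i => isClosed_iInter fun j =>
      isClosed_eq (Continuous.inner (continuous_apply i) (continuous_apply j)) continuous_const
  · apply Bornology.IsBounded.subset (Metric.isBounded_closedBall
      (x := (0 : Fin n → EuclideanSpace ℝ (Fin n ⊕ Fin m))) (r := 1))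
    intro e he
    rw [mem_closedBall, dist_pi_le_iff zero_le_one]
    intro i
    simp only [Pi.zero_apply, dist_zero_right]
    exact le_of_eq (he.1 i)



variable {n m : ℕ}

lemma hasFDerivAt_q (p₀ p : EuclideanSpace ℝ (Fin n ⊕ Fin m)) :
    HasFDerivAt (fun p => ⟪p - p₀, p - p₀⟫) ((2:ℝ) • (innerSL ℝ) (p - p₀)) p := by
  have h1 : HasFDerivAt (fun p : EuclideanSpace ℝ (Fin n ⊕ Fin m) => p - p₀)
      (ContinuousLinearMap.id ℝ _) p := (hasFDerivAt_id p).sub_const p₀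
  have h2 := h1.inner ℝ h1
  refine h2.congr_fderiv ?_
  ext v
  rw [ContinuousLinearMap.comp_apply, fderivInnerCLM_apply]
  simp only [ContinuousLinearMap.smul_apply, innerSL_apply_apply, smul_eq_mul,
    ContinuousLinearMap.prod_apply, ContinuousLinearMap.id_apply]
  rw [real_inner_comm (p - p₀) v]
  ring

lemma iteratedFDeriv_q (p₀ p v : EuclideanSpace ℝ (Fin n ⊕ Fin m)) :
    iteratedFDeriv ℝ 2 (fun p : EuclideanSpace ℝ (Fin n ⊕ Fin m) => ⟪p - p₀, p - p₀⟫) p ![v, v]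
      = 2 * ⟪v, v⟫ := by
  have hfq : fderiv ℝ (fun p : EuclideanSpace ℝ (Fin n ⊕ Fin m) => ⟪p - p₀, p - p₀⟫)
      = fun p => ((2:ℝ) • (innerSL ℝ : _)) (p - p₀) :=
    funext fun p => (hasFDerivAt_q p₀ p).fderiv
  rw [iteratedFDeriv_two_apply, hfq]
  have h3 : HasFDerivAt (fun q : EuclideanSpace ℝ (Fin n ⊕ Fin m) =>
      ((2:ℝ) • (innerSL ℝ : _)) (q - p₀)) ((2:ℝ) • (innerSL ℝ)) p := by
    have := (((2:ℝ) • (innerSL ℝ (E := EuclideanSpace ℝ (Fin n ⊕ Fin m)))).hasFDerivAt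
      (x := id p - p₀)).comp p ((hasFDerivAt_id p).sub_const p₀)
    exact this.congr_fderiv (ContinuousLinearMap.comp_id _)
  rw [h3.fderiv]
  simp [smul_eq_mul, innerSL_apply_apply, real_inner_self_eq_norm_sq]
  exact real_inner_self_eq_norm_sq v

lemma contDiff_q (p₀ : EuclideanSpace ℝ (Fin n ⊕ Fin m)) :
    ContDiff ℝ ((2:ℕ) : ℕ∞) (fun p : EuclideanSpace ℝ (Fin n ⊕ Fin m) => ⟪p - p₀, p - p₀⟫) :=
  ContDiff.inner ℝ (contDiff_id.sub contDiff_const) (contDiff_id.sub contDiff_const)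

lemma comparison_perturb {U : Set (EuclideanSpace ℝ (Fin n ⊕ Fin m))}
    {G : EuclideanSpace ℝ (Fin n ⊕ Fin m) → ℝ} (hU : IsOpen U)
    (hG : IsComparisonFn n m U G) {p₀ : EuclideanSpace ℝ (Fin n ⊕ Fin m)} (hp₀ : p₀ ∈ U) :
    ∃ ρ > (0:ℝ), ∃ δ > (0:ℝ), closedBall p₀ ρ ⊆ U ∧
      IsComparisonFn n m (ball p₀ ρ) (fun p : EuclideanSpace ℝ (Fin n ⊕ Fin m) => G p - δ * ⟪p - p₀, p - p₀⟫) := by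
  classical
  have hG2 : ContDiff ℝ ((2:ℕ) : ℕ∞) G := by exact_mod_cast hG.1
  have hGdiff : Differentiable ℝ G := hG.1.differentiable (by norm_num)
  -- radius inside U
  obtain ⟨ρ₀, hρ₀, hρU⟩ : ∃ ρ > (0:ℝ), closedBall p₀ ρ ⊆ U :=
    Metric.nhds_basis_closedBall.mem_iff.1 (hU.mem_nhds hp₀)
  -- continuity of the trace and gradient-defect functionals
  set Φ : EuclideanSpace ℝ (Fin n ⊕ Fin m) × (Fin n → EuclideanSpace ℝ (Fin n ⊕ Fin m)) → ℝ :=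
    fun pe => ∑ i : Fin n, iteratedFDeriv ℝ 2 G pe.1 ![pe.2 i, pe.2 i] with hΦdef
  set Ψ : EuclideanSpace ℝ (Fin n ⊕ Fin m) × (Fin n → EuclideanSpace ℝ (Fin n ⊕ Fin m)) → ℝ :=
    fun pe => ∑ i : Fin n, ‖fderiv ℝ G pe.1 (pe.2 i)‖ with hΨdef
  have hpair : ∀ (a : EuclideanSpace ℝ (Fin n ⊕ Fin m)), ![a, a] = fun _ : Fin 2 => a := by
    intro a; funext j; fin_cases j <;> rfl
  have hΦc : Continuous Φ := by
    apply continuous_finset_sum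
    intro i _
    have h1 : Continuous fun pe : EuclideanSpace ℝ (Fin n ⊕ Fin m) ×
        (Fin n → EuclideanSpace ℝ (Fin n ⊕ Fin m)) => iteratedFDeriv ℝ 2 G pe.1 :=
      (hG2.continuous_iteratedFDeriv le_rfl).comp continuous_fst
    have h2 : Continuous fun pe : EuclideanSpace ℝ (Fin n ⊕ Fin m) ×
        (Fin n → EuclideanSpace ℝ (Fin n ⊕ Fin m)) => (fun _ : Fin 2 => pe.2 i) :=
      continuous_pi fun _ => (continuous_apply i).comp continuous_snd
    have h3 := continuous_eval.comp (h1.prodMk h2)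
    simp only [hpair]; exact h3
  have hΨc : Continuous Ψ := by
    apply continuous_finset_sum
    intro i _
    apply Continuous.norm
    have h1 : Continuous fun pe : EuclideanSpace ℝ (Fin n ⊕ Fin m) ×
        (Fin n → EuclideanSpace ℝ (Fin n ⊕ Fin m)) => fderiv ℝ G pe.1 :=
      (hG.1.continuous_fderiv (by norm_num)).comp continuous_fst
    exact isBoundedBilinearMap_apply.continuous.comp
      (h1.prodMk ((continuous_apply i).comp continuous_snd))
  -- the set where the trace is nonpositive
  set T := ((closedBall p₀ ρ₀) ×ˢ {e : Fin n → EuclideanSpace ℝ (Fin n ⊕ Fin m) | Orthonormal ℝ e})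
    ∩ Φ ⁻¹' (Iic 0) with hTdef
  have hTc : IsCompact T :=
    ((isCompact_closedBall p₀ ρ₀).prod (isCompact_onb n m)).inter_right
      (isClosed_Iic.preimage hΦc)
  have hΨpos : ∀ pe ∈ T, 0 < Ψ pe := by
    rintro ⟨p, e⟩ ⟨⟨hp, he⟩, hΦle⟩
    have hnonneg : (0:ℝ) ≤ Ψ (p, e) := Finset.sum_nonneg fun i _ => norm_nonneg _
    rcases hnonneg.lt_or_eq with h | h
    · exact h
    · exfalso
      have hzero : ∀ i : Fin n, fderiv ℝ G p (e i) = 0 := by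
        intro i
        have := (Finset.sum_eq_zero_iff_of_nonneg
          (fun i _ => norm_nonneg (fderiv ℝ G p (e i)))).1 h.symm i (Finset.mem_univ i)
        exact norm_eq_zero.1 this
      have hpos := hG.2 p (hρU hp) e he hzero
      have : Φ (p, e) ≤ 0 := hΦle
      simp only [hΦdef] at this
      linarith
  obtain ⟨ε₀, hε₀, hε₀P⟩ : ∃ ε > (0:ℝ), ∀ pe ∈ T, ε ≤ Ψ pe := by
    rcases T.eq_empty_or_nonempty with h | h
    · exact ⟨1, one_pos, by simp [h]⟩
    · obtain ⟨pe₀, hpe₀, hmin⟩ := hTc.exists_isMinOn h hΨc.continuousOn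
      exact ⟨Ψ pe₀, hΨpos _ hpe₀, fun pe hpe => hmin hpe⟩
  -- lower bound for the trace where the gradient defect is small
  set K := ((closedBall p₀ ρ₀) ×ˢ {e : Fin n → EuclideanSpace ℝ (Fin n ⊕ Fin m) | Orthonormal ℝ e})
    ∩ Ψ ⁻¹' (Iic (ε₀ / 2)) with hKdef
  have hKc : IsCompact K :=
    ((isCompact_closedBall p₀ ρ₀).prod (isCompact_onb n m)).inter_right
      (isClosed_Iic.preimage hΨc)
  have hΦK : ∀ pe ∈ K, 0 < Φ pe := by
    rintro pe ⟨hmem, hΨle⟩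
    by_contra hcon
    push_neg at hcon
    have hpeT : pe ∈ T := ⟨hmem, hcon⟩
    have h1 := hε₀P pe hpeT
    have h2 : Ψ pe ≤ ε₀ / 2 := hΨle
    linarith
  obtain ⟨μ, hμ, hμP⟩ : ∃ μ > (0:ℝ), ∀ pe ∈ K, μ ≤ Φ pe := by
    rcases K.eq_empty_or_nonempty with h | h
    · exact ⟨1, one_pos, by simp [h]⟩
    · obtain ⟨pe₀, hpe₀, hmin⟩ := hKc.exists_isMinOn h hΦc.continuousOn
      exact ⟨Φ pe₀, hΦK _ hpe₀, fun pe hpe => hmin hpe⟩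
  -- choice of δ
  set δ := min (μ / (2 * n + 2)) (ε₀ / ((2 * n + 2) * (2 * ρ₀ + 2))) with hδdef
  have hδ : 0 < δ := by positivity
  have hδ1 : 2 * δ * n < μ := by
    have h1 : δ ≤ μ / (2 * n + 2) := min_le_left _ _
    have h2 : δ * (2 * n + 2) ≤ μ := by
      rw [← le_div_iff₀ (by positivity)]
      exact h1
    nlinarith [Nat.cast_nonneg (α := ℝ) n]
  have hδ2 : (n : ℝ) * (2 * δ * ρ₀) ≤ ε₀ / 2 := by
    have h1 : δ ≤ ε₀ / ((2 * n + 2) * (2 * ρ₀ + 2)) := min_le_right _ _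
    have h2 : δ * ((2 * n + 2) * (2 * ρ₀ + 2)) ≤ ε₀ := by
      rw [← le_div_iff₀ (by positivity)]
      exact h1
    nlinarith [Nat.cast_nonneg (α := ℝ) n, hρ₀.le, hδ.le,
      mul_nonneg hδ.le (Nat.cast_nonneg (α := ℝ) n)]
  refine ⟨ρ₀, hρ₀, δ, hδ, hρU, ?_, ?_⟩
  · exact hG.1.sub (contDiff_const.mul (by exact_mod_cast contDiff_q p₀))
  · intro p hp e he hde
    have hpcb : p ∈ closedBall p₀ ρ₀ := ball_subset_closedBall hp
    -- first derivative formula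
    have hfd : ∀ v, fderiv ℝ (fun p : EuclideanSpace ℝ (Fin n ⊕ Fin m) => G p - δ * ⟪p - p₀, p - p₀⟫) p v
        = fderiv ℝ G p v - δ * (2 * ⟪p - p₀, v⟫) := by
      intro v
      have hdq : DifferentiableAt ℝ
          (fun p : EuclideanSpace ℝ (Fin n ⊕ Fin m) => ⟪p - p₀, p - p₀⟫) p :=
        (hasFDerivAt_q p₀ p).differentiableAt
      rw [fderiv_fun_sub (hGdiff p) (hdq.const_mul δ), ContinuousLinearMap.sub_apply]
      congr 1
      rw [fderiv_const_mul hdq δ, (hasFDerivAt_q p₀ p).fderiv]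
      simp only [ContinuousLinearMap.smul_apply, innerSL_apply_apply, smul_eq_mul]
    -- the gradient of G is small at p along e
    have hsmall : ∀ i : Fin n, ‖fderiv ℝ G p (e i)‖ ≤ 2 * δ * ρ₀ := by
      intro i
      have h0 := hde i
      rw [hfd (e i)] at h0
      have h1 : fderiv ℝ G p (e i) = δ * (2 * ⟪p - p₀, e i⟫) := by linarith
      rw [h1]
      have h2 : |⟪p - p₀, e i⟫| ≤ ‖p - p₀‖ * ‖e i‖ := abs_real_inner_le_norm _ _
      have h3 : ‖p - p₀‖ ≤ ρ₀ := by
        rw [← dist_eq_norm]; exact mem_closedBall.1 hpcb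
      have h4 : ‖e i‖ = 1 := he.1 i
      rw [Real.norm_eq_abs, abs_mul, abs_mul, abs_of_nonneg hδ.le]
      rw [h4] at h2
      have h5 : |(2:ℝ)| = 2 := by norm_num
      rw [h5]
      nlinarith
    -- hence (p, e) ∈ K
    have hKmem : (p, e) ∈ K := by
      refine ⟨⟨hpcb, he⟩, ?_⟩
      have : Ψ (p, e) ≤ (n : ℝ) * (2 * δ * ρ₀) := by
        simp only [hΨdef]
        calc ∑ i : Fin n, ‖fderiv ℝ G p (e i)‖
            ≤ ∑ _i : Fin n, (2 * δ * ρ₀) := Finset.sum_le_sum fun i _ => hsmall i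
          _ = (n : ℝ) * (2 * δ * ρ₀) := by simp [Finset.sum_const, mul_comm]
      exact mem_preimage.2 (mem_Iic.2 (this.trans hδ2))
    have hμle := hμP _ hKmem
    -- second derivative formula
    have hiter : ∀ v, iteratedFDeriv ℝ 2 (fun p : EuclideanSpace ℝ (Fin n ⊕ Fin m) => G p - δ * ⟪p - p₀, p - p₀⟫) p ![v, v]
        = iteratedFDeriv ℝ 2 G p ![v, v] - δ * (2 * ⟪v, v⟫) := by
      intro v
      have hqc2 : ContDiff ℝ ((2:ℕ) : ℕ∞)
          (fun p : EuclideanSpace ℝ (Fin n ⊕ Fin m) => (-δ) * ⟪p - p₀, p - p₀⟫) :=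
        contDiff_const.mul (contDiff_q p₀)
      have h1 : (fun p : EuclideanSpace ℝ (Fin n ⊕ Fin m) => G p - δ * ⟪p - p₀, p - p₀⟫)
          = (fun p => G p + (fun p : EuclideanSpace ℝ (Fin n ⊕ Fin m) =>
              (-δ) * ⟪p - p₀, p - p₀⟫) p) := by
        funext p; ring
      rw [h1, iteratedFDeriv_add_apply' hG2.contDiffAt hqc2.contDiffAt, ContinuousMultilinearMap.add_apply]
      congr 1
      have h2 : (fun p : EuclideanSpace ℝ (Fin n ⊕ Fin m) => (-δ) * ⟪p - p₀, p - p₀⟫)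
          = (-δ) • (fun p : EuclideanSpace ℝ (Fin n ⊕ Fin m) => ⟪p - p₀, p - p₀⟫) := by
        funext p; simp [smul_eq_mul]
      rw [h2, iteratedFDeriv_const_smul_apply (contDiff_q p₀).contDiffAt,
        ContinuousMultilinearMap.smul_apply, iteratedFDeriv_q p₀ p v, smul_eq_mul]
      ring
    have hone : ∀ i : Fin n, ⟪e i, e i⟫ = (1:ℝ) := by
      intro i
      rw [real_inner_self_eq_norm_sq, he.1 i, one_pow]
    have hsum : ∑ i : Fin n, iteratedFDeriv ℝ 2
        (fun p : EuclideanSpace ℝ (Fin n ⊕ Fin m) => G p - δ * ⟪p - p₀, p - p₀⟫) p ![e i, e i]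
        = Φ (p, e) - (n : ℝ) * (2 * δ) := by
      calc ∑ i : Fin n, (iteratedFDeriv ℝ 2
          (fun p : EuclideanSpace ℝ (Fin n ⊕ Fin m) => G p - δ * ⟪p - p₀, p - p₀⟫) p : ContinuousMultilinearMap ℝ (fun _ : Fin 2 => EuclideanSpace ℝ (Fin n ⊕ Fin m)) ℝ) ![e i, e i]
          = ∑ i : Fin n, (iteratedFDeriv ℝ 2 G p ![e i, e i] - 2 * δ) := by
            apply Finset.sum_congr rfl
            intro i _
            rw [hiter (e i), hone i]
            ring
        _ = Φ (p, e) - (n : ℝ) * (2 * δ) := by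
            rw [Finset.sum_sub_distrib, Finset.sum_const, Finset.card_univ, Fintype.card_fin]
            simp only [hΦdef, nsmul_eq_mul]
    rw [hsum]
    have hrw : (n : ℝ) * (2 * δ) = 2 * δ * n := by ring
    rw [hrw]
    linarith

end ViscStab

/-- **Stability of viscosity solutions.**
If a sequence of viscosity solutions of the minimal surface system converges to `u`
uniformly on compact subsets of `Ω`, then `u` is a viscosity solution as well. -/
theorem viscosity_stability
    (n m : ℕ) (Ω : Set (EuclideanSpace ℝ (Fin n))) (hΩ : IsOpen Ω)
    (useq : ℕ → EuclideanSpace ℝ (Fin n) → EuclideanSpace ℝ (Fin m))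
    (u : EuclideanSpace ℝ (Fin n) → EuclideanSpace ℝ (Fin m))
    (hsol : ∀ j, IsViscositySolution n m Ω (useq j))
    (hconv : ∀ K ⊆ Ω, IsCompact K → TendstoUniformlyOn useq u atTop K) :
    IsViscositySolution n m Ω u := by
  classical
  have hu_cont : ContinuousOn u Ω := by
    intro x hx
    obtain ⟨r, hr, hsub⟩ := Metric.nhds_basis_closedBall.mem_iff.1 (hΩ.mem_nhds hx)
    have hcont : ContinuousOn u (closedBall x r) :=
      (hconv _ hsub (isCompact_closedBall _ _)).continuousOn
        (Filter.Frequently.of_forall fun j => (hsol j).1.mono hsub)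
    exact (hcont.continuousAt (closedBall_mem_nhds x hr)).continuousWithinAt
  refine ⟨hu_cont, ?_⟩
  intro U G c x₀ hU hG hx₀ hp₀U hGc hEv
  obtain ⟨ρ₀, hρ₀, δ, hδ, hρU, hcmp⟩ := ViscStab.comparison_perturb hU hG hp₀U
  set p₀ := graphMap n m u x₀ with hp₀def
  set Gt : EuclideanSpace ℝ (Fin n ⊕ Fin m) → ℝ :=
    fun p => G p - δ * ⟪p - p₀, p - p₀⟫ with hGtdef
  have hGtc : Continuous Gt := by
    have h1 : Continuous fun p : EuclideanSpace ℝ (Fin n ⊕ Fin m) => ⟪p - p₀, p - p₀⟫ :=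
      (continuous_id.sub continuous_const).inner (continuous_id.sub continuous_const)
    exact (hG.1.continuous).sub (continuous_const.mul h1)
  -- extract a radius from the touching hypothesis
  have hΩev : ∀ᶠ x in 𝓝 x₀, x ∈ Ω := hΩ.mem_nhds hx₀
  have hEv' : ∀ᶠ x in 𝓝 x₀, graphMap n m u x ∈ U → G (graphMap n m u x) ≤ c := by
    rwa [nhdsWithin_eq_nhds.2 (hΩ.mem_nhds hx₀)] at hEv
  obtain ⟨r₁, hr₁, hP⟩ := Metric.eventually_nhds_iff.1 (hΩev.and hEv')
  -- continuity of u at x₀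
  have huc : ContinuousAt u x₀ := hu_cont.continuousAt (hΩ.mem_nhds hx₀)
  obtain ⟨r₂, hr₂, hu₂⟩ := Metric.continuousAt_iff.1 huc (ρ₀ / 4) (by positivity)
  set r := min r₁ (min r₂ (ρ₀ / 4)) / 2 with hrdef
  have hr : 0 < r := by positivity
  have hhalf : r < min r₁ (min r₂ (ρ₀ / 4)) := by
    rw [hrdef]; exact half_lt_self (by positivity)
  have hrr₁ : r < r₁ := hhalf.trans_le (min_le_left _ _)
  have hrr₂ : r < r₂ := hhalf.trans_le ((min_le_right _ _).trans (min_le_left _ _))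
  have hrρ : r ≤ ρ₀ / 4 := (hhalf.trans_le ((min_le_right _ _).trans (min_le_right _ _))).le
  have hsubΩ : closedBall x₀ r ⊆ Ω := fun x hx =>
    (hP ((mem_closedBall.1 hx).trans_lt hrr₁)).1
  have hGle : ∀ x ∈ closedBall x₀ r, graphMap n m u x ∈ U → G (graphMap n m u x) ≤ c :=
    fun x hx => (hP ((mem_closedBall.1 hx).trans_lt hrr₁)).2
  have hux : ∀ x ∈ closedBall x₀ r, dist (u x) (u x₀) < ρ₀ / 4 :=
    fun x hx => hu₂ ((mem_closedBall.1 hx).trans_lt hrr₂)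
  have hFmem : ∀ x ∈ closedBall x₀ r, dist (graphMap n m u x) p₀ < ρ₀ / 2 := by
    intro x hx
    calc dist (graphMap n m u x) p₀ ≤ dist x x₀ + dist (u x) (u x₀) :=
          ViscStab.graph_dist_le u u x x₀
      _ < ρ₀ / 4 + ρ₀ / 4 :=
          add_lt_add_of_le_of_lt ((mem_closedBall.1 hx).trans hrρ) (hux x hx)
      _ = ρ₀ / 2 := by ring
  have hGt_ineq : ∀ x ∈ closedBall x₀ r,
      Gt (graphMap n m u x) ≤ c - δ * dist x x₀ ^ 2 := by
    intro x hx
    have hU' : graphMap n m u x ∈ U :=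
      hρU (mem_closedBall.2 ((hFmem x hx).le.trans (by linarith)))
    have h1 := hGle x hx hU'
    have h2 : dist x x₀ ^ 2 ≤ ⟪graphMap n m u x - p₀, graphMap n m u x - p₀⟫ := by
      rw [real_inner_self_eq_norm_sq, ← dist_eq_norm]
      have := ViscStab.dist_le_graph u x x₀
      have h3 : dist x x₀ ≤ dist (graphMap n m u x) p₀ := this
      exact pow_le_pow_left₀ dist_nonneg h3 2
    have h4 : δ * dist x x₀ ^ 2 ≤ δ * ⟪graphMap n m u x - p₀, graphMap n m u x - p₀⟫ :=
      mul_le_mul_of_nonneg_left h2 hδ.le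
    simp only [hGtdef]
    linarith
  -- uniform continuity of Gt on the closed ball
  have hGtu := (isCompact_closedBall p₀ ρ₀).uniformContinuousOn_of_continuous
    hGtc.continuousOn
  obtain ⟨η, hη, hηP⟩ := Metric.uniformContinuousOn_iff.1 hGtu (δ * r ^ 2 / 8) (by positivity)
  -- choose j with uniform closeness
  have hcv := Metric.tendstoUniformlyOn_iff.1
    (hconv _ hsubΩ (isCompact_closedBall x₀ r)) (min η (ρ₀ / 4)) (by positivity)
  obtain ⟨j, hj⟩ := hcv.exists
  set v := useq j with hvdef
  have hdFv : ∀ x ∈ closedBall x₀ r,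
      dist (graphMap n m v x) (graphMap n m u x) < min η (ρ₀ / 4) := by
    intro x hx
    rw [ViscStab.dist_graphMap, dist_comm]
    exact hj x hx
  have hFvball : ∀ x ∈ closedBall x₀ r, graphMap n m v x ∈ ball p₀ ρ₀ := by
    intro x hx
    rw [mem_ball]
    calc dist (graphMap n m v x) p₀
        ≤ dist (graphMap n m v x) (graphMap n m u x) + dist (graphMap n m u x) p₀ :=
          dist_triangle _ _ _
      _ < ρ₀ / 4 + ρ₀ / 2 := add_lt_add ((hdFv x hx).trans_le (min_le_right _ _)) (hFmem x hx)
      _ < ρ₀ := by linarith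
  have hFvcb : ∀ x ∈ closedBall x₀ r, graphMap n m v x ∈ closedBall p₀ ρ₀ :=
    fun x hx => ball_subset_closedBall (hFvball x hx)
  have hFucb : ∀ x ∈ closedBall x₀ r, graphMap n m u x ∈ closedBall p₀ ρ₀ :=
    fun x hx => mem_closedBall.2 ((hFmem x hx).le.trans (by linarith))
  have hGtclose : ∀ x ∈ closedBall x₀ r,
      dist (Gt (graphMap n m v x)) (Gt (graphMap n m u x)) < δ * r ^ 2 / 8 := by
    intro x hx
    exact hηP _ (hFvcb x hx) _ (hFucb x hx) ((hdFv x hx).trans_le (min_le_left _ _))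
  -- maximum of Gt along the graph of v
  set φ : EuclideanSpace ℝ (Fin n) → ℝ := fun x => Gt (graphMap n m v x) with hφdef
  have hφcont : ContinuousOn φ (closedBall x₀ r) :=
    hGtc.comp_continuousOn (ViscStab.continuousOn_graphMap ((hsol j).1.mono hsubΩ))
  obtain ⟨xj, hxjK, hmax⟩ := (isCompact_closedBall x₀ r).exists_isMaxOn
    ⟨x₀, mem_closedBall_self hr.le⟩ hφcont
  have hmax' : ∀ x ∈ closedBall x₀ r, φ x ≤ φ xj := fun x hx => hmax hx
  have hGtp₀ : Gt p₀ = c := by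
    simp only [hGtdef, sub_self, inner_zero_left, mul_zero, sub_zero]
    exact hGc
  have hφx₀ : c - δ * r ^ 2 / 8 < φ x₀ := by
    have h := hGtclose x₀ (mem_closedBall_self hr.le)
    rw [Real.dist_eq] at h
    have h2 : Gt (graphMap n m u x₀) = c := hGtp₀
    rw [h2] at h
    have := abs_lt.1 h
    simp only [hφdef]
    linarith [this.1]
  have hφxj : c - δ * r ^ 2 / 8 < φ xj :=
    hφx₀.trans_le (hmax' x₀ (mem_closedBall_self hr.le))
  have hxjball : dist xj x₀ < r := by
    by_contra hcon
    push_neg at hcon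
    have heq : dist xj x₀ = r := le_antisymm (mem_closedBall.1 hxjK) hcon
    have h1 := hGtclose xj hxjK
    rw [Real.dist_eq] at h1
    have h2 := hGt_ineq xj hxjK
    rw [heq] at h2
    have h3 := (abs_lt.1 h1).2
    have hpos : 0 < δ * r ^ 2 := by positivity
    simp only [hφdef] at hφxj
    have t1 : Gt (graphMap n m v xj) - Gt (graphMap n m u xj) < δ * r ^ 2 / 8 := h3
    have t2 : Gt (graphMap n m u xj) ≤ c - δ * r ^ 2 := h2
    have t3 : c - δ * r ^ 2 / 8 < Gt (graphMap n m v xj) := hφxj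
    clear_value r v Gt φ p₀
    linarith only [t1, t2, t3, hpos]
  -- contradiction with the viscosity property of useq j
  have happly := (hsol j).2 (ball p₀ ρ₀) Gt (φ xj) xj isOpen_ball hcmp (hsubΩ hxjK)
    (hFvball xj hxjK) rfl
  apply happly
  have hball_nhds : ball x₀ r ∈ 𝓝 xj := isOpen_ball.mem_nhds (mem_ball.2 hxjball)
  exact Filter.eventually_of_mem (mem_nhdsWithin_of_mem_nhds hball_nhds)
    (fun x hx _ => hmax' x (ball_subset_closedBall hx))

end
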